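/- arXiv:1809.08576 — 5 statements merged into one kernel-verified Lean document; each statement's English description precedes it below -/
import Mathlib

section
/- Let E_1 < E_2 < E_3 < E_4 and F_1 < F_2 < F_3 < F_4 be the four events of protocol executions E (by p_0) and F (by p_1) of Kishon's Poker algorithm, with all eight events embedded in a strict linear (interleaving) order extending the two process orders. Let n_0 > 0 and n_1 > 0 be the natural numbers picked by p_0 and p_1. By seriality of the registers, the read E_3 returns v_0 = n_1 if F_2 < E_3 and v_0 = 0 otherwise, and the read F_3 returns v_1 = n_0 if E_2 < F_3 and v_1 = 0 otherwise. Let val_0 = 0 if v_0 = 0 or v_0 = n_0, val_0 = 1 if 0 < v_0 < n_0, and val_0 = -1 if v_0 > n_0, and let val_1 be defined symmetrically from v_1 and n_1. Then: if n_0 < n_1 then val_0 < val_1; if n_1 < n_0 then val_1 < val_0; and if n_0 = n_1 then val_0 = val_1 = 0. -/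
/-!
Some write precedes the other process's read: if both reads came before the other process's
write, then `E₂ < E₃ ≤ F₂ < F₃ ≤ E₂`. So at least one process reads the other's number, the
other reads that number or `0`, and a read of `0` decides `0`. With `n₀ < n₁`, `p₀` decides `-1`
or `0` and `p₁` decides `1` or `0`, not both `0`; with `n₀ = n₁` both decide `0`.
-/

theorem lt_or_lt_of_lt_of_lt {α : Type*} [LinearOrder α] {a b c d : α}
    (hab : a < b) (hcd : c < d) : c < b ∨ a < d :=
  (lt_or_ge c b).imp_right fun hbc => hab.trans_le (hbc.trans hcd.le)

def pokerVal (n v : ℕ) : ℤ :=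
  if v = 0 ∨ v = n then 0 else if v < n then 1 else -1

theorem eq_pokerVal {n v : ℕ} {val : ℤ} (hzero : v = 0 ∨ v = n → val = 0)
    (hone : 0 < v ∧ v < n → val = 1) (hneg : n < v → val = -1) : val = pokerVal n v := by
  unfold pokerVal
  split_ifs with hv hlt
  · exact hzero hv
  · exact hone ⟨by omega, hlt⟩
  · exact hneg (by omega)

theorem pokerVal_ite_self (n : ℕ) (p : Prop) [Decidable p] :
    pokerVal n (if p then n else 0) = 0 := by
  unfold pokerVal
  split_ifs <;> simp_all

theorem pokerVal_ite_of_lt {n m : ℕ} (hm : 0 < m) (h : n < m) (p : Prop) [Decidable p] :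
    pokerVal n (if p then m else 0) = if p then -1 else 0 := by
  unfold pokerVal
  split_ifs <;> omega

theorem pokerVal_ite_of_gt {n m : ℕ} (hm : 0 < m) (h : m < n) (p : Prop) [Decidable p] :
    pokerVal n (if p then m else 0) = if p then 1 else 0 := by
  unfold pokerVal
  split_ifs <;> omega

theorem pokerVal_lt_of_lt {n₀ n₁ : ℕ} (hn₀ : 0 < n₀) (hn₁ : 0 < n₁) (h : n₀ < n₁)
    {p₀ p₁ : Prop} [Decidable p₀] [Decidable p₁] (hread : p₀ ∨ p₁) :
    pokerVal n₀ (if p₀ then n₁ else 0) < pokerVal n₁ (if p₁ then n₀ else 0) := by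
  rw [pokerVal_ite_of_lt hn₁ h, pokerVal_ite_of_gt hn₀ h]
  split_ifs <;> simp_all

theorem kishon_serial_correctness_general
    {α : Type*} [LinearOrder α]
    (E2 E3 F2 F3 : α)
    (hE23 : E2 < E3)
    (hF23 : F2 < F3)
    (n0 n1 : ℕ) (hn0 : 0 < n0) (hn1 : 0 < n1)
    (v0 v1 : ℕ)
    -- seriality of the registers determines the values of the reads:
    (hv0 : v0 = if F2 < E3 then n1 else 0)
    (hv1 : v1 = if E2 < F3 then n0 else 0)
    (val0 val1 : ℤ)
    (hval0_zero : v0 = 0 ∨ v0 = n0 → val0 = 0)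
    (hval0_one  : 0 < v0 ∧ v0 < n0 → val0 = 1)
    (hval0_neg  : n0 < v0 → val0 = -1)
    (hval1_zero : v1 = 0 ∨ v1 = n1 → val1 = 0)
    (hval1_one  : 0 < v1 ∧ v1 < n1 → val1 = 1)
    (hval1_neg  : n1 < v1 → val1 = -1) :
    (n0 < n1 → val0 < val1) ∧
    (n1 < n0 → val1 < val0) ∧
    (n0 = n1 → val0 = 0 ∧ val1 = 0) := by
  have hread : F2 < E3 ∨ E2 < F3 := lt_or_lt_of_lt_of_lt hE23 hF23
  rw [eq_pokerVal hval0_zero hval0_one hval0_neg, eq_pokerVal hval1_zero hval1_one hval1_neg,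
    hv0, hv1]
  refine ⟨fun h => pokerVal_lt_of_lt hn0 hn1 h hread,
    fun h => pokerVal_lt_of_lt hn1 hn0 h hread.symm, ?_⟩
  rintro rfl
  exact ⟨pokerVal_ite_self n0 _, pokerVal_ite_self n0 _⟩

theorem kishon_serial_correctness
    {α : Type*} [LinearOrder α]
    (E1 E2 E3 E4 F1 F2 F3 F4 : α)
    (hE12 : E1 < E2) (hE23 : E2 < E3) (hE34 : E3 < E4)
    (hF12 : F1 < F2) (hF23 : F2 < F3) (hF34 : F3 < F4)
    (n0 n1 : ℕ) (hn0 : 0 < n0) (hn1 : 0 < n1)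
    (v0 v1 : ℕ)
    -- seriality of the registers determines the values of the reads:
    (hv0 : v0 = if F2 < E3 then n1 else 0)
    (hv1 : v1 = if E2 < F3 then n0 else 0)
    (val0 val1 : ℤ)
    (hval0_zero : v0 = 0 ∨ v0 = n0 → val0 = 0)
    (hval0_one  : 0 < v0 ∧ v0 < n0 → val0 = 1)
    (hval0_neg  : n0 < v0 → val0 = -1)
    (hval1_zero : v1 = 0 ∨ v1 = n1 → val1 = 0)
    (hval1_one  : 0 < v1 ∧ v1 < n1 → val1 = 1)
    (hval1_neg  : n1 < v1 → val1 = -1) :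
    (n0 < n1 → val0 < val1) ∧
    (n1 < n0 → val1 < val0) ∧
    (n0 = n1 → val0 = 0 ∧ val1 = 0) :=
  kishon_serial_correctness_general E2 E3 F2 F3 hE23 hF23 n0 n1 hn0 hn1 v0 v1 hv0 hv1 val0 val1
    hval0_zero hval0_one hval0_neg hval1_zero hval1_one hval1_neg
end

section
/- Under the hypotheses of a restricted system execution of Kishon's Poker algorithm with regular registers: (1) if Val(a_1) < Val(b_1) then Val(a_4) < Val(b_4); (2) if Val(a_1) > Val(b_1) then Val(a_4) > Val(b_4); (3) if Val(a_1) = Val(b_1) then Val(a_4) = Val(b_4) = 0. -/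
/-!
Applied to `a₂ < a₃` and `b₂ < b₃`, the Russell–Wiener property says that `b₂ < a₃` or `a₂ < b₃`:
at least one read follows the other process's write, so by regularity at least one process reads
the other's value. A process that reads `0` outputs `0`, and one that reads the other's value
outputs the sign of (own value − other value). Both outputs therefore lie in `{0, sign}` with at
least one equal to its sign, which gives the three claims.
-/

theorem lt_or_lt_of_russell_wiener {α : Type*} {r : α → α → Prop}
    (hRW : ∀ a b c d, r a b → r c d → ¬ r c b → r a d) {a b c d : α}
    (hab : r a b) (hcd : r c d) : r c b ∨ r a d :=
  or_iff_not_imp_left.2 (hRW a b c d hab hcd)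

theorem output_eq_sign_of_read_eq {own other read out : ℤ} (hother : 0 < other)
    (hzero : read = 0 ∨ read = own → out = 0) (hone : 0 < read ∧ read < own → out = 1)
    (hneg : own < read → out = -1) (hread : read = other) :
    out = Int.sign (own - other) := by
  subst hread
  rcases lt_trichotomy own read with h | rfl | h
  · rw [hneg h, Int.sign_eq_neg_one_of_neg (sub_neg.2 h)]
  · rw [hzero (Or.inr rfl), sub_self, Int.sign_zero]
  · rw [hone ⟨hother, h⟩, Int.sign_eq_one_of_pos (sub_pos.2 h)]

theorem order_of_eq_zero_or_eq_sign {x y o p : ℤ} (ho : o = 0 ∨ o = Int.sign (x - y))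
    (hp : p = 0 ∨ p = Int.sign (y - x)) (hseen : o = Int.sign (x - y) ∨ p = Int.sign (y - x)) :
    (x < y → o < p) ∧ (y < x → p < o) ∧ (x = y → o = 0 ∧ p = 0) := by
  rcases lt_trichotomy x y with h | rfl | h
  · rw [Int.sign_eq_neg_one_of_neg (sub_neg.2 h), Int.sign_eq_one_of_pos (sub_pos.2 h)] at *
    omega
  · simp only [sub_self, Int.sign_zero, or_self] at ho hp
    omega
  · rw [Int.sign_eq_one_of_pos (sub_pos.2 h), Int.sign_eq_neg_one_of_neg (sub_neg.2 h)] at *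
    omega

theorem kishon_regular_correctness_general
    {α : Type*} (lt : α → α → Prop)
    (hRW : ∀ a b c d, lt a b → lt c d → ¬ lt c b → lt a d)
    (a1 a2 a3 a4 b1 b2 b3 b4 : α)
    (ha23 : lt a2 a3)
    (hb23 : lt b2 b3)
    (Val : α → ℤ)
    -- non-restricted properties of process p₀
    (ha1pos : 0 < Val a1) (ha2 : Val a2 = Val a1)
    (ha4zero : Val a3 = 0 ∨ Val a3 = Val a1 → Val a4 = 0)
    (ha4one  : 0 < Val a3 ∧ Val a3 < Val a1 → Val a4 = 1)
    (ha4neg  : Val a1 < Val a3 → Val a4 = -1)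
    -- non-restricted properties of process p₁
    (hb1pos : 0 < Val b1) (hb2 : Val b2 = Val b1)
    (hb4zero : Val b3 = 0 ∨ Val b3 = Val b1 → Val b4 = 0)
    (hb4one  : 0 < Val b3 ∧ Val b3 < Val b1 → Val b4 = 1)
    (hb4neg  : Val b1 < Val b3 → Val b4 = -1)
    -- regularity of register R₀ (unique write a2, read b3, initial value 0)
    (hregb3 : Val b3 = 0 ∨ Val b3 = Val a2)
    (hregb3w : lt a2 b3 → Val b3 = Val a2)
    -- regularity of register R₁ (unique write b2, read a3, initial value 0)
    (hrega3 : Val a3 = 0 ∨ Val a3 = Val b2)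
    (hrega3w : lt b2 a3 → Val a3 = Val b2) :
    (Val a1 < Val b1 → Val a4 < Val b4) ∧
    (Val b1 < Val a1 → Val b4 < Val a4) ∧
    (Val a1 = Val b1 → Val a4 = 0 ∧ Val b4 = 0) := by
  have ha4sign : Val a3 = Val b2 → Val a4 = Int.sign (Val a1 - Val b1) := fun h =>
    output_eq_sign_of_read_eq hb1pos ha4zero ha4one ha4neg (h.trans hb2)
  have hb4sign : Val b3 = Val a2 → Val b4 = Int.sign (Val b1 - Val a1) := fun h =>
    output_eq_sign_of_read_eq ha1pos hb4zero hb4one hb4neg (h.trans ha2)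
  refine order_of_eq_zero_or_eq_sign ?_ ?_ ?_
  · exact hrega3.imp (fun h => ha4zero (Or.inl h)) ha4sign
  · exact hregb3.imp (fun h => hb4zero (Or.inl h)) hb4sign
  · exact (lt_or_lt_of_russell_wiener hRW ha23 hb23).imp
      (fun h => ha4sign (hrega3w h)) (fun h => hb4sign (hregb3w h))

theorem kishon_regular_correctness
    {α : Type*} (lt : α → α → Prop)
    (hirr : ∀ a, ¬ lt a a)
    (htrans : ∀ a b c, lt a b → lt b c → lt a c)
    (hRW : ∀ a b c d, lt a b → lt c d → ¬ lt c b → lt a d)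
    (a1 a2 a3 a4 b1 b2 b3 b4 : α)
    (ha12 : lt a1 a2) (ha23 : lt a2 a3) (ha34 : lt a3 a4)
    (hb12 : lt b1 b2) (hb23 : lt b2 b3) (hb34 : lt b3 b4)
    (Val : α → ℤ)
    -- Val maps into ℕ ∪ {-1}
    (hrange : ∀ e, Val e = -1 ∨ 0 ≤ Val e)
    -- non-restricted properties of process p₀
    (ha1pos : 0 < Val a1) (ha2 : Val a2 = Val a1) (ha3nat : 0 ≤ Val a3)
    (ha4zero : Val a3 = 0 ∨ Val a3 = Val a1 → Val a4 = 0)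
    (ha4one  : 0 < Val a3 ∧ Val a3 < Val a1 → Val a4 = 1)
    (ha4neg  : Val a1 < Val a3 → Val a4 = -1)
    -- non-restricted properties of process p₁
    (hb1pos : 0 < Val b1) (hb2 : Val b2 = Val b1) (hb3nat : 0 ≤ Val b3)
    (hb4zero : Val b3 = 0 ∨ Val b3 = Val b1 → Val b4 = 0)
    (hb4one  : 0 < Val b3 ∧ Val b3 < Val b1 → Val b4 = 1)
    (hb4neg  : Val b1 < Val b3 → Val b4 = -1)
    -- regularity of register R₀ (unique write a2, read b3, initial value 0)
    (hregb3 : Val b3 = 0 ∨ Val b3 = Val a2)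
    (hregb3w : lt a2 b3 → Val b3 = Val a2)
    (hregb3r : lt b3 a2 → Val b3 = 0)
    -- regularity of register R₁ (unique write b2, read a3, initial value 0)
    (hrega3 : Val a3 = 0 ∨ Val a3 = Val b2)
    (hrega3w : lt b2 a3 → Val a3 = Val b2)
    (hrega3r : lt a3 b2 → Val a3 = 0) :
    (Val a1 < Val b1 → Val a4 < Val b4) ∧
    (Val b1 < Val a1 → Val b4 < Val a4) ∧
    (Val a1 = Val b1 → Val a4 = 0 ∧ Val b4 = 0) :=
  kishon_regular_correctness_general lt hRW a1 a2 a3 a4 b1 b2 b3 b4 ha23 hb23 Val ha1pos ha2 ha4zero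
    ha4one ha4neg hb1pos hb2 hb4zero hb4one hb4neg hregb3 hregb3w hrega3 hrega3w
end

section
/- Under the hypotheses of a restricted system execution of Kishon's Poker algorithm with regular registers, it is not the case that Val(a_3) = 0 and Val(b_3) = 0. -/
theorem lt_or_lt_of_russellWiener {α : Type*} {lt : α → α → Prop}
    (hRW : ∀ a b c d, lt a b → lt c d → ¬ lt c b → lt a d)
    {a b c d : α} (hab : lt a b) (hcd : lt c d) : lt c b ∨ lt a d :=
  or_iff_not_imp_left.mpr (hRW a b c d hab hcd)

theorem kishon_not_both_reads_zero_general
    {α : Type*} (lt : α → α → Prop)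
    (hRW : ∀ a b c d, lt a b → lt c d → ¬ lt c b → lt a d)
    (a1 a2 a3 b1 b2 b3 : α)
    (ha23 : lt a2 a3)
    (hb23 : lt b2 b3)
    (Val : α → ℤ)
    -- non-restricted properties of process p₀
    (ha1pos : 0 < Val a1) (ha2 : Val a2 = Val a1)
    -- non-restricted properties of process p₁
    (hb1pos : 0 < Val b1) (hb2 : Val b2 = Val b1)
    -- regularity of register R₀ (unique write a2, read b3, initial value 0)
    (hregb3w : lt a2 b3 → Val b3 = Val a2)
    -- regularity of register R₁ (unique write b2, read a3, initial value 0)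
    (hrega3w : lt b2 a3 → Val a3 = Val b2) :
    ¬ (Val a3 = 0 ∧ Val b3 = 0) := by
  rintro ⟨ha3, hb3⟩
  rcases lt_or_lt_of_russellWiener hRW ha23 hb23 with hb2a3 | ha2b3
  · have := hrega3w hb2a3
    omega
  · have := hregb3w ha2b3
    omega

theorem kishon_not_both_reads_zero
    {α : Type*} (lt : α → α → Prop)
    (hirr : ∀ a, ¬ lt a a)
    (htrans : ∀ a b c, lt a b → lt b c → lt a c)
    (hRW : ∀ a b c d, lt a b → lt c d → ¬ lt c b → lt a d)
    (a1 a2 a3 a4 b1 b2 b3 b4 : α)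
    (ha12 : lt a1 a2) (ha23 : lt a2 a3) (ha34 : lt a3 a4)
    (hb12 : lt b1 b2) (hb23 : lt b2 b3) (hb34 : lt b3 b4)
    (Val : α → ℤ)
    -- Val maps into ℕ ∪ {-1}
    (hrange : ∀ e, Val e = -1 ∨ 0 ≤ Val e)
    -- non-restricted properties of process p₀
    (ha1pos : 0 < Val a1) (ha2 : Val a2 = Val a1) (ha3nat : 0 ≤ Val a3)
    (ha4zero : Val a3 = 0 ∨ Val a3 = Val a1 → Val a4 = 0)
    (ha4one  : 0 < Val a3 ∧ Val a3 < Val a1 → Val a4 = 1)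
    (ha4neg  : Val a1 < Val a3 → Val a4 = -1)
    -- non-restricted properties of process p₁
    (hb1pos : 0 < Val b1) (hb2 : Val b2 = Val b1) (hb3nat : 0 ≤ Val b3)
    (hb4zero : Val b3 = 0 ∨ Val b3 = Val b1 → Val b4 = 0)
    (hb4one  : 0 < Val b3 ∧ Val b3 < Val b1 → Val b4 = 1)
    (hb4neg  : Val b1 < Val b3 → Val b4 = -1)
    -- regularity of register R₀ (unique write a2, read b3, initial value 0)
    (hregb3 : Val b3 = 0 ∨ Val b3 = Val a2)
    (hregb3w : lt a2 b3 → Val b3 = Val a2)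
    (hregb3r : lt b3 a2 → Val b3 = 0)
    -- regularity of register R₁ (unique write b2, read a3, initial value 0)
    (hrega3 : Val a3 = 0 ∨ Val a3 = Val b2)
    (hrega3w : lt b2 a3 → Val a3 = Val b2)
    (hrega3r : lt a3 b2 → Val a3 = 0) :
    ¬ (Val a3 = 0 ∧ Val b3 = 0) :=
  kishon_not_both_reads_zero_general lt hRW a1 a2 a3 b1 b2 b3 ha23 hb23 Val ha1pos ha2 hb1pos hb2
    hregb3w hrega3w
end

section
/- Under the hypotheses of a restricted system execution of Kishon's Poker algorithm with regular registers, suppose Val(a_1) < Val(b_1). Then: (1) if Val(b_3) ≠ 0 then Val(b_4) = 1; (2) if Val(a_3) ≠ 0 then Val(a_4) = -1. -/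
theorem kishon_nonzero_read_returns_general
    {α : Type*}
    (a1 a2 a3 a4 b1 b2 b3 b4 : α)
    (Val : α → ℤ)
    -- non-restricted properties of process p₀
    (ha1pos : 0 < Val a1) (ha2 : Val a2 = Val a1)
    (ha4neg  : Val a1 < Val a3 → Val a4 = -1)
    -- non-restricted properties of process p₁
    (hb2 : Val b2 = Val b1)
    (hb4one  : 0 < Val b3 ∧ Val b3 < Val b1 → Val b4 = 1)
    -- regularity of register R₀ (unique write a2, read b3, initial value 0)
    (hregb3 : Val b3 = 0 ∨ Val b3 = Val a2)
    -- regularity of register R₁ (unique write b2, read a3, initial value 0)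
    (hrega3 : Val a3 = 0 ∨ Val a3 = Val b2)
    (hlt : Val a1 < Val b1) :
    (Val b3 ≠ 0 → Val b4 = 1) ∧
    (Val a3 ≠ 0 → Val a4 = -1) := by
  constructor
  · intro hb3
    have hread : Val b3 = Val a1 := (hregb3.resolve_left hb3).trans ha2
    exact hb4one ⟨hread ▸ ha1pos, hread ▸ hlt⟩
  · intro ha3
    have hread : Val a3 = Val b1 := (hrega3.resolve_left ha3).trans hb2
    exact ha4neg (hread ▸ hlt)

theorem kishon_nonzero_read_returns
    {α : Type*} (lt : α → α → Prop)
    (hirr : ∀ a, ¬ lt a a)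
    (htrans : ∀ a b c, lt a b → lt b c → lt a c)
    (hRW : ∀ a b c d, lt a b → lt c d → ¬ lt c b → lt a d)
    (a1 a2 a3 a4 b1 b2 b3 b4 : α)
    (ha12 : lt a1 a2) (ha23 : lt a2 a3) (ha34 : lt a3 a4)
    (hb12 : lt b1 b2) (hb23 : lt b2 b3) (hb34 : lt b3 b4)
    (Val : α → ℤ)
    -- Val maps into ℕ ∪ {-1}
    (hrange : ∀ e, Val e = -1 ∨ 0 ≤ Val e)
    -- non-restricted properties of process p₀
    (ha1pos : 0 < Val a1) (ha2 : Val a2 = Val a1) (ha3nat : 0 ≤ Val a3)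
    (ha4zero : Val a3 = 0 ∨ Val a3 = Val a1 → Val a4 = 0)
    (ha4one  : 0 < Val a3 ∧ Val a3 < Val a1 → Val a4 = 1)
    (ha4neg  : Val a1 < Val a3 → Val a4 = -1)
    -- non-restricted properties of process p₁
    (hb1pos : 0 < Val b1) (hb2 : Val b2 = Val b1) (hb3nat : 0 ≤ Val b3)
    (hb4zero : Val b3 = 0 ∨ Val b3 = Val b1 → Val b4 = 0)
    (hb4one  : 0 < Val b3 ∧ Val b3 < Val b1 → Val b4 = 1)
    (hb4neg  : Val b1 < Val b3 → Val b4 = -1)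
    -- regularity of register R₀ (unique write a2, read b3, initial value 0)
    (hregb3 : Val b3 = 0 ∨ Val b3 = Val a2)
    (hregb3w : lt a2 b3 → Val b3 = Val a2)
    (hregb3r : lt b3 a2 → Val b3 = 0)
    -- regularity of register R₁ (unique write b2, read a3, initial value 0)
    (hrega3 : Val a3 = 0 ∨ Val a3 = Val b2)
    (hrega3w : lt b2 a3 → Val a3 = Val b2)
    (hrega3r : lt a3 b2 → Val a3 = 0)
    (hlt : Val a1 < Val b1) :
    (Val b3 ≠ 0 → Val b4 = 1) ∧
    (Val a3 ≠ 0 → Val a4 = -1) :=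
  kishon_nonzero_read_returns_general a1 a2 a3 a4 b1 b2 b3 b4 Val ha1pos ha2 ha4neg hb2 hb4one
    hregb3 hrega3 hlt
end

section
/- The condition φ = α ∧ β ∧ γ ∧ τ is an invariant of Kishon's Poker algorithm: it holds in the initial state, and for every step (S, T), if φ holds in S then φ holds in T. -/
/-- A global state of Kishon's Poker algorithm.  The variables `valᵢ` and `PCᵢ`
are given ambient types `ℤ` and `ℕ`; the typing condition
(`valᵢ ∈ {-1,0,1}`, `PCᵢ ∈ {1,…,5}`) is the predicate `tauP` below. -/
structure KState where
  n0 : ℕ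
  v0 : ℕ
  R0 : ℕ
  val0 : ℤ
  PC0 : ℕ
  n1 : ℕ
  v1 : ℕ
  R1 : ℕ
  val1 : ℤ
  PC1 : ℕ

/-- The initial state. -/
def KInit (S : KState) : Prop :=
  S.PC0 = 1 ∧ S.PC1 = 1 ∧ S.n0 = 0 ∧ S.v0 = 0 ∧ S.R0 = 0 ∧ S.val0 = 0 ∧
  S.n1 = 0 ∧ S.v1 = 0 ∧ S.R1 = 0 ∧ S.val1 = 0

/-- A final state. -/
def KFinal (S : KState) : Prop := S.PC0 = 5 ∧ S.PC1 = 5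

/-- The variables of process `p₁` are unchanged. -/
def Unch1 (S T : KState) : Prop :=
  T.n1 = S.n1 ∧ T.v1 = S.v1 ∧ T.R1 = S.R1 ∧ T.val1 = S.val1 ∧ T.PC1 = S.PC1

/-- The variables of process `p₀` are unchanged. -/
def Unch0 (S T : KState) : Prop :=
  T.n0 = S.n0 ∧ T.v0 = S.v0 ∧ T.R0 = S.R0 ∧ T.val0 = S.val0 ∧ T.PC0 = S.PC0

/-- A step of process `p₀`. -/
def Step0 (S T : KState) : Prop :=
  Unch1 S T ∧
  ( -- (1₀,2₀): pick-a-number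
    (S.PC0 = 1 ∧ T.PC0 = 2 ∧ 0 < T.n0 ∧
      T.v0 = S.v0 ∧ T.R0 = S.R0 ∧ T.val0 = S.val0) ∨
    -- (2₀,3₀): write R₀ := n₀
    (S.PC0 = 2 ∧ T.PC0 = 3 ∧ T.R0 = S.n0 ∧
      T.n0 = S.n0 ∧ T.v0 = S.v0 ∧ T.val0 = S.val0) ∨
    -- (3₀,4₀): read v₀ := R₁
    (S.PC0 = 3 ∧ T.PC0 = 4 ∧ T.v0 = S.R1 ∧
      T.n0 = S.n0 ∧ T.R0 = S.R0 ∧ T.val0 = S.val0) ∨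
    -- (4₀,5₀): compute val₀
    (S.PC0 = 4 ∧ T.PC0 = 5 ∧
      ((S.v0 = 0 ∨ S.v0 = S.n0) → T.val0 = 0) ∧
      (0 < S.v0 ∧ S.v0 < S.n0 → T.val0 = 1) ∧
      (S.n0 < S.v0 → T.val0 = -1) ∧
      T.n0 = S.n0 ∧ T.v0 = S.v0 ∧ T.R0 = S.R0))

/-- A step of process `p₁`. -/
def Step1 (S T : KState) : Prop :=
  Unch0 S T ∧
  ( (S.PC1 = 1 ∧ T.PC1 = 2 ∧ 0 < T.n1 ∧
      T.v1 = S.v1 ∧ T.R1 = S.R1 ∧ T.val1 = S.val1) ∨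
    (S.PC1 = 2 ∧ T.PC1 = 3 ∧ T.R1 = S.n1 ∧
      T.n1 = S.n1 ∧ T.v1 = S.v1 ∧ T.val1 = S.val1) ∨
    (S.PC1 = 3 ∧ T.PC1 = 4 ∧ T.v1 = S.R0 ∧
      T.n1 = S.n1 ∧ T.R1 = S.R1 ∧ T.val1 = S.val1) ∨
    (S.PC1 = 4 ∧ T.PC1 = 5 ∧
      ((S.v1 = 0 ∨ S.v1 = S.n1) → T.val1 = 0) ∧
      (0 < S.v1 ∧ S.v1 < S.n1 → T.val1 = 1) ∧
      (S.n1 < S.v1 → T.val1 = -1) ∧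
      T.n1 = S.n1 ∧ T.v1 = S.v1 ∧ T.R1 = S.R1))

/-- A step is a step of `p₀` or of `p₁`. -/
def KStep (S T : KState) : Prop := Step0 S T ∨ Step1 S T

/-- `H 0, …, H k` is a history sequence. -/
def KHistory (H : ℕ → KState) (k : ℕ) : Prop :=
  KInit (H 0) ∧ ∀ j, j < k → KStep (H j) (H (j + 1))

/-- α: the conjunction α1–α5 about process `p₀`. -/
def alphaP (S : KState) : Prop :=
  (2 ≤ S.PC0 → 0 < S.n0) ∧
  (S.PC0 ≤ 2 → S.R0 = 0) ∧
  (3 ≤ S.PC0 → S.R0 = S.n0) ∧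
  (S.v0 ≠ 0 → S.v0 = S.R1) ∧
  (S.PC0 = 5 →
    (S.v0 = 0 → S.val0 = 0) ∧ (S.v0 = S.n0 → S.val0 = 0) ∧
    (0 < S.v0 ∧ S.v0 < S.n0 → S.val0 = 1) ∧ (S.n0 < S.v0 → S.val0 = -1))

/-- β: the conjunction β1–β5 about process `p₁`. -/
def betaP (S : KState) : Prop :=
  (2 ≤ S.PC1 → 0 < S.n1) ∧
  (S.PC1 ≤ 2 → S.R1 = 0) ∧
  (3 ≤ S.PC1 → S.R1 = S.n1) ∧
  (S.v1 ≠ 0 → S.v1 = S.R0) ∧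
  (S.PC1 = 5 →
    (S.v1 = 0 → S.val1 = 0) ∧ (S.v1 = S.n1 → S.val1 = 0) ∧
    (0 < S.v1 ∧ S.v1 < S.n1 → S.val1 = 1) ∧ (S.n1 < S.v1 → S.val1 = -1))

/-- γ. -/
def gammaP (S : KState) : Prop :=
  4 ≤ S.PC0 ∧ 4 ≤ S.PC1 → S.v0 = S.R1 ∨ S.v1 = S.R0

/-- τ: every state variable has a value in its type. -/
def tauP (S : KState) : Prop :=
  (S.val0 = -1 ∨ S.val0 = 0 ∨ S.val0 = 1) ∧
  (S.val1 = -1 ∨ S.val1 = 0 ∨ S.val1 = 1) ∧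
  (1 ≤ S.PC0 ∧ S.PC0 ≤ 5) ∧ (1 ≤ S.PC1 ∧ S.PC1 ≤ 5)

/-- φ = α ∧ β ∧ γ ∧ τ. -/
def phiP (S : KState) : Prop := alphaP S ∧ betaP S ∧ gammaP S ∧ tauP S

/-! The two processes are mirror images of each other, so every statement about a step of `p₁`
is the corresponding statement about a step of `p₀` in the state with the indices interchanged.
For a step of `p₀`, each conjunct of `φ` is preserved using only `α`, `γ` or `τ` respectively,
except `β₄`: the step `(2₀,3₀)` changes `R₀`, and `β₄` survives it because `α₂` gives `R₀ = 0`
before the step, so no nonzero `v₁` can have been read from `R₀`. -/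

namespace KState

def swap (S : KState) : KState :=
  ⟨S.n1, S.v1, S.R1, S.val1, S.PC1, S.n0, S.v0, S.R0, S.val0, S.PC0⟩

end KState

theorem alphaP_swap (S : KState) : alphaP S.swap ↔ betaP S := Iff.rfl

theorem betaP_swap (S : KState) : betaP S.swap ↔ alphaP S := Iff.rfl

theorem gammaP_swap (S : KState) : gammaP S.swap ↔ gammaP S :=
  imp_congr and_comm or_comm

theorem tauP_swap (S : KState) : tauP S.swap ↔ tauP S := by
  simp only [tauP, KState.swap]
  tauto

theorem phiP_swap (S : KState) : phiP S.swap ↔ phiP S := by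
  simp only [phiP, alphaP_swap, betaP_swap, gammaP_swap, tauP_swap]
  tauto

theorem step1_iff_step0_swap (S T : KState) : Step1 S T ↔ Step0 S.swap T.swap := Iff.rfl

section Step0

variable {S T : KState}

theorem alphaP_of_step0 (h : Step0 S T) (hα : alphaP S) : alphaP T := by
  unfold Step0 Unch1 at h
  unfold alphaP at *
  omega

theorem betaP_of_step0 (h : Step0 S T) (hα : alphaP S) (hβ : betaP S) : betaP T := by
  unfold Step0 Unch1 at h
  unfold alphaP betaP at *
  omega

theorem gammaP_of_step0 (h : Step0 S T) (hγ : gammaP S) : gammaP T := by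
  unfold Step0 Unch1 at h
  unfold gammaP at *
  omega

theorem tauP_of_step0 (h : Step0 S T) (hτ : tauP S) : tauP T := by
  unfold Step0 Unch1 at h
  unfold tauP at *
  omega

theorem phiP_of_step0 (h : Step0 S T) (hS : phiP S) : phiP T :=
  let ⟨hα, hβ, hγ, hτ⟩ := hS
  ⟨alphaP_of_step0 h hα, betaP_of_step0 h hα hβ, gammaP_of_step0 h hγ, tauP_of_step0 h hτ⟩

end Step0

theorem phiP_of_step1 {S T : KState} (h : Step1 S T) (hS : phiP S) : phiP T :=
  (phiP_swap T).1 <| phiP_of_step0 ((step1_iff_step0_swap S T).1 h) ((phiP_swap S).2 hS)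

theorem phiP_of_kInit {S : KState} (h : KInit S) : phiP S := by
  unfold KInit at h
  simp only [phiP, alphaP, betaP, gammaP, tauP]
  omega

theorem kishon_phi_invariant :
    (∀ S : KState, KInit S → phiP S) ∧
    (∀ S T : KState, KStep S T → phiP S → phiP T) :=
  ⟨fun _ => phiP_of_kInit, fun _ _ h => h.elim phiP_of_step0 phiP_of_step1⟩
end
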